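/- Let m > 0 and let H : (0,∞) → ℝ be continuous with H(t) > 0 for all t > 0 and lim_{t→0⁺} ∫_t^{t₁} H(u) du = +∞ for every t₁ > 0. Fix t₁ > 0 and z₁ ∈ (0,1), and let z be the solution of the ODE z'(t) = (H(t)/2)(1 − z²) + (z/(4m))(1 − z²)² with z(t₁) = z₁, continued backward in t on the maximal interval on which z takes values in (0,1). Then this maximal interval has a left endpoint t₀ with 0 < t₀ < t₁, and lim_{t→t₀⁺} z(t) = 0. -/

import Mathlib

/-!
The right-hand side is positive for `z ∈ (0,1)`, so `z` increases. Moreover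
`d/dt (-log (1 - z)) = z' / (1 - z) ≥ H / 2`, so `∫_t^{t₁} H ≤ -2 log (1 - z(t₁))` on the whole
interval of existence, and the big-bang condition rules out `t₀ ≤ 0`. Hence `t₀ > 0` and `z` has
a limit `L ∈ [0,1)` at `t₀⁺`. If `L > 0`, the field is continuous and locally Lipschitz near
`(t₀, L)`, so Picard–Lindelöf gives a solution through `(t₀, L)` on some `[b, t₀]` with values in
`(0,1)`; glued to `z` it continues the solution past `t₀`, contradicting maximality.
-/

open Real Filter Set

open Topology NNReal Function Metric

theorem LipschitzOnWith.of_uncurry {α β γ : Type*} [PseudoEMetricSpace α] [PseudoEMetricSpace β]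
    [PseudoEMetricSpace γ] {g : α → β → γ} {s : Set α} {u : Set β} {K : ℝ≥0}
    (hg : LipschitzOnWith K (uncurry g) (s ×ˢ u)) {a : α} (ha : a ∈ s) :
    LipschitzOnWith K (g a) u := fun x hx y hy ↦ by
  simpa [Prod.edist_eq] using hg (mk_mem_prod ha hx) (mk_mem_prod ha hy)

theorem exists_Icc_subset_preimage_of_continuousWithinAt {X : Type*} [TopologicalSpace X]
    {α : ℝ → X} {b t₀ : ℝ} {U : Set X}
    (hb : b < t₀) (hα : ContinuousWithinAt α (Icc b t₀) t₀) (hU : U ∈ 𝓝 (α t₀)) :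
    ∃ c ∈ Ico b t₀, Icc c t₀ ⊆ α ⁻¹' U := by
  rw [ContinuousWithinAt, nhdsWithin_Icc_eq_nhdsLE hb] at hα
  obtain ⟨l, hl, hlU⟩ := mem_nhdsLE_iff_exists_Icc_subset.1 (hα hU)
  exact ⟨max b l, ⟨le_max_left _ _, max_lt hb hl⟩,
    (Icc_subset_Icc_left (le_max_right _ _)).trans hlU⟩

theorem MonotoneOn.exists_mem_Ico_tendsto_nhdsGT {f : ℝ → ℝ} {a b c d : ℝ}
    (hf : MonotoneOn f (Ioc a b)) (hab : a < b) (hfcd : MapsTo f (Ioc a b) (Ioo c d)) :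
    ∃ L ∈ Ico c d, Tendsto f (𝓝[>] a) (𝓝 L) := by
  have hlim := (hf.mono Ioo_subset_Ioc_self).tendsto_nhdsWithin_Ioo_right (nonempty_Ioo.2 hab)
    ⟨c, forall_mem_image.2 fun t ht ↦ (hfcd (Ioo_subset_Ioc_self ht)).1.le⟩
  have hIoo : Ioo a b ∈ 𝓝[>] a := Ioo_mem_nhdsGT hab
  refine ⟨_, ⟨ge_of_tendsto hlim ?_, (le_of_tendsto hlim ?_).trans_lt (hfcd ⟨hab, le_rfl⟩).2⟩, hlim⟩
  · exact eventually_of_mem hIoo fun t ht ↦ (hfcd (Ioo_subset_Ioc_self ht)).1.le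
  · exact eventually_of_mem hIoo fun t ht ↦ hf (Ioo_subset_Ioc_self ht) ⟨hab, le_rfl⟩ ht.2.le

section LocalSolution

variable {E : Type*} [NormedAddCommGroup E] [NormedSpace ℝ E]

theorem exists_forall_mem_Icc_hasDerivWithinAt_left [ProperSpace E] {f : ℝ → E → E}
    {t₀ δ : ℝ} {x₀ : E} {a K : ℝ≥0} (hδ : 0 < δ) (ha : 0 < a)
    (hf : ContinuousOn (uncurry f) (Icc (t₀ - δ) t₀ ×ˢ closedBall x₀ a))
    (hlip : ∀ t ∈ Icc (t₀ - δ) t₀, LipschitzOnWith K (f t) (closedBall x₀ a)) :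
    ∃ b ∈ Ico (t₀ - δ) t₀, ∃ α : ℝ → E, α t₀ = x₀ ∧
      ∀ t ∈ Icc b t₀, HasDerivWithinAt α (f t (α t)) (Icc b t₀) t := by
  obtain ⟨C, hC⟩ :=
    (isCompact_Icc.prod (isCompact_closedBall x₀ a)).exists_bound_of_continuousOn hf
  set L : ℝ≥0 := C.toNNReal
  set ε : ℝ := min δ (a / (L + 1))
  have hε : 0 < ε := lt_min hδ (by positivity)
  have hεδ : ε ≤ δ := min_le_left _ _
  have hsub : Icc (t₀ - ε) t₀ ⊆ Icc (t₀ - δ) t₀ := Icc_subset_Icc_left (by linarith)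
  have hpl : IsPicardLindelof f (tmin := t₀ - ε) (tmax := t₀) ⟨t₀, by linarith, le_rfl⟩
      x₀ a 0 L K :=
    { lipschitzOnWith := fun t ht ↦ hlip t (hsub ht)
      continuousOn := fun x hx ↦ hf.comp (continuousOn_id.prodMk continuousOn_const)
        fun t ht ↦ ⟨hsub ht, hx⟩
      norm_le := fun t ht x hx ↦ (hC (t, x) ⟨hsub ht, hx⟩).trans (le_coe_toNNReal C)
      mul_max_le := by
        have hεa : (L + 1) * ε ≤ a := calc
          (L + 1) * ε ≤ (L + 1) * (a / (L + 1)) := by gcongr; exact min_le_right _ _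
          _ = a := by field_simp
        simp only [sub_self, sub_sub_cancel, max_eq_right hε.le, NNReal.coe_zero, sub_zero]
        nlinarith }
  obtain ⟨α, hα₀, hα⟩ := hpl.exists_eq_forall_mem_Icc_hasDerivWithinAt₀
  exact ⟨t₀ - ε, ⟨by linarith, by linarith⟩, α, hα₀, hα⟩

theorem exists_eqOn_hasDerivAt_of_tendsto {f : ℝ → E → E} {z α : ℝ → E} {b t₀ t₁ : ℝ}
    (hb : b < t₀) (ht₁ : t₀ < t₁) (hf : ContinuousAt (uncurry f) (t₀, α t₀))
    (hz : ∀ t ∈ Ioc t₀ t₁, HasDerivAt z (f t (z t)) t) (hzα : Tendsto z (𝓝[>] t₀) (𝓝 (α t₀)))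
    (hα : ∀ t ∈ Icc b t₀, HasDerivWithinAt α (f t (α t)) (Icc b t₀) t) :
    ∃ w : ℝ → E, EqOn w z (Ioi t₀) ∧ EqOn w α (Iic t₀) ∧
      ∀ t ∈ Ioc b t₁, HasDerivAt w (f t (w t)) t := by
  classical
  set w : ℝ → E := (Iic t₀).piecewise α z
  have hwα : EqOn w α (Iic t₀) := piecewise_eqOn _ _ _
  have hwz : EqOn w z (Ioi t₀) := fun t ht ↦ piecewise_eq_of_notMem _ _ _ (notMem_Iic.2 ht)
  have hw_right : ∀ t ∈ Ioc t₀ t₁, HasDerivAt w (f t (w t)) t := fun t ht ↦ by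
    rw [hwz ht.1]
    exact (hz t ht).congr_of_eventuallyEq (hwz.eventuallyEq_of_mem (Ioi_mem_nhds ht.1))
  refine ⟨w, hwz, hwα, fun t ht ↦ ?_⟩
  rcases lt_trichotomy t t₀ with hlt | rfl | hgt
  · rw [hwα hlt.le]
    exact ((hα t ⟨ht.1.le, hlt.le⟩).hasDerivAt (Icc_mem_nhds ht.1 hlt)).congr_of_eventuallyEq
      (hwα.eventuallyEq_of_mem (Iic_mem_nhds hlt))
  · have hleft : HasDerivWithinAt w (f t (w t)) (Iic t) t := by
      rw [hwα self_mem_Iic]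
      exact ((hα t (right_mem_Icc.2 hb.le)).congr (hwα.mono Icc_subset_Iic_self)
        (hwα self_mem_Iic)).mono_of_mem_nhdsWithin (Icc_mem_nhdsLE hb)
    have hright : HasDerivWithinAt w (f t (w t)) (Ici t) t := by
      have hIoo : Ioo t t₁ ∈ 𝓝[>] t := Ioo_mem_nhdsGT ht₁
      have hwz_lim : Tendsto w (𝓝[>] t) (𝓝 (α t)) :=
        hzα.congr' (hwz.eventuallyEq_of_mem self_mem_nhdsWithin).symm
      refine hasDerivWithinAt_Ici_of_tendsto_deriv (s := Ioo t t₁)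
        (fun x hx ↦ (hw_right x ⟨hx.1, hx.2.le⟩).differentiableAt.differentiableWithinAt)
        ?_ hIoo ?_
      · rw [ContinuousWithinAt, hwα self_mem_Iic]
        exact hwz_lim.mono_left (nhdsWithin_mono _ Ioo_subset_Ioi_self)
      · rw [hwα self_mem_Iic]
        have hfw : Tendsto (fun x ↦ f x (w x)) (𝓝[>] t) (𝓝 (f t (α t))) :=
          hf.tendsto.comp ((tendsto_nhdsWithin_of_tendsto_nhds tendsto_id).prodMk_nhds hwz_lim)
        exact hfw.congr' (eventually_of_mem hIoo fun x hx ↦ (hw_right x ⟨hx.1, hx.2.le⟩).deriv.symm)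
    simpa only [Iic_union_Ici, hasDerivWithinAt_univ] using hleft.union hright
  · exact hw_right t ⟨hgt, ht.2⟩

end LocalSolution

noncomputable def mcvittieField (m h x : ℝ) : ℝ :=
  h / 2 * (1 - x ^ 2) + x / (4 * m) * (1 - x ^ 2) ^ 2

theorem contDiff_mcvittieField (m : ℝ) : ContDiff ℝ 1 (uncurry (mcvittieField m)) := by
  unfold mcvittieField
  fun_prop

section McVittie

variable {m t₀ t₁ : ℝ} {H z : ℝ → ℝ}

theorem mcvittieField_pos {h x : ℝ} (hm : 0 < m) (hh : 0 < h) (hx : x ∈ Ioo 0 1) :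
    0 < mcvittieField m h x := by
  have hx2 : 0 < 1 - x ^ 2 := by nlinarith [hx.1, hx.2]
  have hq : 0 < x / (4 * m) := div_pos hx.1 (by positivity)
  unfold mcvittieField
  positivity

theorem half_mul_one_sub_le_mcvittieField {h x : ℝ} (hm : 0 < m) (hh : 0 ≤ h)
    (hx : x ∈ Icc 0 1) : h / 2 * (1 - x) ≤ mcvittieField m h x := by
  have hx2 : x ^ 2 ≤ x := by nlinarith [hx.1, hx.2]
  have hq : 0 ≤ x / (4 * m) * (1 - x ^ 2) ^ 2 :=
    mul_nonneg (div_nonneg hx.1 (by positivity)) (sq_nonneg _)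
  unfold mcvittieField
  nlinarith

theorem exists_mcvittie_solution_Icc_left {x₀ : ℝ} (hH : ContinuousOn H (Ioi 0)) (ht₀ : 0 < t₀)
    (hx₀ : x₀ ∈ Ioo 0 1) :
    ∃ b ∈ Ioo 0 t₀, ∃ α : ℝ → ℝ, α t₀ = x₀ ∧ ∀ t ∈ Icc b t₀,
      α t ∈ Ioo 0 1 ∧ HasDerivWithinAt α (mcvittieField m (H t) (α t)) (Icc b t₀) t := by
  have hHc : ContinuousOn H (Icc (t₀ - t₀ / 2) t₀) :=
    hH.mono fun t ht ↦ show 0 < t by linarith [ht.1]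
  obtain ⟨K, hK⟩ := (contDiff_mcvittieField m).locallyLipschitz.locallyLipschitzOn
    |>.exists_lipschitzOnWith_of_compact
      ((isCompact_Icc.image_of_continuousOn hHc).prod (isCompact_closedBall x₀ 1))
  have hf : ContinuousOn (uncurry fun t ↦ mcvittieField m (H t))
      (Icc (t₀ - t₀ / 2) t₀ ×ˢ closedBall x₀ (1 : ℝ≥0)) :=
    (contDiff_mcvittieField m).continuous.comp_continuousOn
      ((hHc.comp continuousOn_fst fun _ hp ↦ hp.1).prodMk continuousOn_snd)
  obtain ⟨b₀, hb₀, α, hα₀, hα⟩ := exists_forall_mem_Icc_hasDerivWithinAt_left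
    (half_pos ht₀) one_pos hf fun t ht ↦ hK.of_uncurry (mem_image_of_mem H ht)
  obtain ⟨b, hb, hbU⟩ := exists_Icc_subset_preimage_of_continuousWithinAt hb₀.2
    (hα t₀ (right_mem_Icc.2 hb₀.2.le)).continuousWithinAt (hα₀ ▸ Ioo_mem_nhds hx₀.1 hx₀.2)
  refine ⟨b, ⟨by linarith [hb.1, hb₀.1], hb.2⟩, α, hα₀, fun t ht ↦ ⟨hbU ht, ?_⟩⟩
  exact (hα t ⟨hb.1.trans ht.1, ht.2⟩).mono (Icc_subset_Icc_left hb.1)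

theorem integral_le_neg_two_mul_log_of_mcvittie {t : ℝ} (hm : 0 < m) (htt₁ : t ≤ t₁)
    (hH : ContinuousOn H (Icc t t₁)) (hH₀ : ∀ s ∈ Icc t t₁, 0 ≤ H s)
    (hz : ∀ s ∈ Icc t t₁, HasDerivAt z (mcvittieField m (H s) (z s)) s)
    (hz₀₁ : ∀ s ∈ Icc t t₁, z s ∈ Ioo 0 1) :
    ∫ s in t..t₁, H s ≤ -2 * log (1 - z t₁) := by
  have hlog : ∀ s ∈ Icc t t₁, HasDerivAt (fun s ↦ -2 * log (1 - z s))
      (-2 * (-mcvittieField m (H s) (z s) / (1 - z s))) s := fun s hs ↦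
    (((hz s hs).const_sub 1).log (sub_pos.2 (hz₀₁ s hs).2).ne').const_mul (-2)
  have hbound : ∀ s ∈ Ioo t t₁, H s ≤ -2 * (-mcvittieField m (H s) (z s) / (1 - z s)) := by
    intro s hs
    have hs' := Ioo_subset_Icc_self hs
    have hz1 := sub_pos.2 (hz₀₁ s hs').2
    rw [neg_div, mul_neg, neg_mul, neg_neg, mul_div_assoc', le_div_iff₀ hz1]
    linarith [half_mul_one_sub_le_mcvittieField hm (hH₀ s hs')
      ⟨(hz₀₁ s hs').1.le, (hz₀₁ s hs').2.le⟩]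
  have hint := intervalIntegral.integral_le_sub_of_hasDeriv_right_of_le htt₁
    (fun s hs ↦ (hlog s hs).continuousAt.continuousWithinAt)
    (fun s hs ↦ (hlog s (Ioo_subset_Icc_self hs)).hasDerivWithinAt) hH.integrableOn_Icc hbound
  have hzt := hz₀₁ t (left_mem_Icc.2 htt₁)
  have : log (1 - z t) ≤ 0 := log_nonpos (by linarith [hzt.2]) (by linarith [hzt.1])
  linarith

theorem strictMonoOn_of_mcvittie {s : Set ℝ} (hm : 0 < m) (hs : Convex ℝ s)
    (hH : ∀ t ∈ s, 0 < H t) (hz : ∀ t ∈ s, HasDerivAt z (mcvittieField m (H t) (z t)) t)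
    (hz₀₁ : ∀ t ∈ s, z t ∈ Ioo 0 1) : StrictMonoOn z s :=
  strictMonoOn_of_deriv_pos hs (fun t ht ↦ (hz t ht).continuousAt.continuousWithinAt)
    fun t ht ↦ by
      have ht' := interior_subset ht
      rw [(hz t ht').deriv]
      exact mcvittieField_pos hm (hH t ht') (hz₀₁ t ht')

theorem mcvittie_solution_left_endpoint_pos (hm : 0 < m) (hHcont : ContinuousOn H (Ioi 0))
    (hH₀ : ∀ t > 0, 0 ≤ H t) (hbb : Tendsto (fun t ↦ ∫ u in t..t₁, H u) (𝓝[>] 0) atTop)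
    (ht₁ : 0 < t₁) (hz : ∀ t ∈ Ioc t₀ t₁, HasDerivAt z (mcvittieField m (H t) (z t)) t)
    (hz₀₁ : ∀ t ∈ Ioc t₀ t₁, z t ∈ Ioo 0 1) : 0 < t₀ := by
  by_contra! ht₀
  obtain ⟨t, ht, hlarge⟩ := Filter.nonempty_of_mem <|
    inter_mem (Ioo_mem_nhdsGT ht₁) (hbb.eventually_gt_atTop (-2 * log (1 - z t₁)))
  have hpos : Icc t t₁ ⊆ Ioi 0 := fun s hs ↦ ht.1.trans_le hs.1
  have hsub : Icc t t₁ ⊆ Ioc t₀ t₁ := fun s hs ↦ ⟨ht₀.trans_lt (hpos hs), hs.2⟩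
  exact hlarge.not_ge (integral_le_neg_two_mul_log_of_mcvittie hm ht.2.le (hHcont.mono hpos)
    (fun s hs ↦ hH₀ s (hpos hs)) (fun s hs ↦ hz s (hsub hs)) fun s hs ↦ hz₀₁ s (hsub hs))

theorem exists_mcvittie_extension_of_tendsto (hHcont : ContinuousOn H (Ioi 0)) (ht₀ : 0 < t₀)
    (ht₀₁ : t₀ < t₁) (hz : ∀ t ∈ Ioc t₀ t₁, HasDerivAt z (mcvittieField m (H t) (z t)) t)
    (hz₀₁ : ∀ t ∈ Ioc t₀ t₁, z t ∈ Ioo 0 1) {L : ℝ} (hL : L ∈ Ioo 0 1)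
    (hzL : Tendsto z (𝓝[>] t₀) (𝓝 L)) :
    ∃ b ∈ Ioo 0 t₀, ∃ w : ℝ → ℝ, (∀ t ∈ Ioc b t₁, HasDerivAt w (mcvittieField m (H t) (w t)) t) ∧
      (∀ t ∈ Ioc b t₁, w t ∈ Ioo 0 1) ∧ EqOn w z (Ioc t₀ t₁) := by
  obtain ⟨b, hb, α, hα₀, hα⟩ := exists_mcvittie_solution_Icc_left (m := m) hHcont ht₀ hL
  have hf : ContinuousAt (uncurry fun t ↦ mcvittieField m (H t)) (t₀, α t₀) :=
    (contDiff_mcvittieField m).continuous.continuousAt.comp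
      ((hHcont.continuousAt (Ioi_mem_nhds ht₀)).prodMap continuousAt_id)
  obtain ⟨w, hwz, hwα, hw⟩ :=
    exists_eqOn_hasDerivAt_of_tendsto hb.2 ht₀₁ hf hz (hα₀ ▸ hzL) fun t ht ↦ (hα t ht).2
  refine ⟨b, hb, w, hw, fun t ht ↦ ?_, hwz.mono fun t ht ↦ ht.1⟩
  rcases le_or_gt t t₀ with h | h
  · rw [hwα h]
    exact (hα t ⟨ht.1.le, h⟩).1
  · rw [hwz h]
    exact hz₀₁ t ⟨h, ht.2⟩

end McVittie

theorem orng_originates_at_singularity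
    (m t₁ : ℝ) (hm : 0 < m) (H : ℝ → ℝ)
    (hHcont : ContinuousOn H (Set.Ioi 0))
    (hHpos : ∀ t > 0, 0 < H t)
    (hbb : ∀ T > 0, Tendsto (fun t => ∫ u in t..T, H u) (nhdsWithin 0 (Set.Ioi 0)) atTop)
    (ht₁ : 0 < t₁)
    (t₀ : ℝ) (ht₀1 : t₀ < t₁) (z : ℝ → ℝ)
    (hode : ∀ t ∈ Set.Ioc t₀ t₁,
      HasDerivAt z (H t / 2 * (1 - (z t)^2) + z t / (4*m) * (1 - (z t)^2)^2) t)
    (hrange : ∀ t ∈ Set.Ioc t₀ t₁, z t ∈ Set.Ioo (0:ℝ) 1)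
    (hmax : ¬ ∃ (t₀' : ℝ) (w : ℝ → ℝ), 0 ≤ t₀' ∧ t₀' < t₀ ∧
      (∀ t ∈ Set.Ioc t₀' t₁,
        HasDerivAt w (H t / 2 * (1 - (w t)^2) + w t / (4*m) * (1 - (w t)^2)^2) t) ∧
      (∀ t ∈ Set.Ioc t₀' t₁, w t ∈ Set.Ioo (0:ℝ) 1) ∧
      (∀ t ∈ Set.Ioc t₀ t₁, w t = z t)) :
    0 < t₀ ∧ Tendsto z (nhdsWithin t₀ (Set.Ioi t₀)) (nhds 0) := by
  have hzF : ∀ t ∈ Ioc t₀ t₁, HasDerivAt z (mcvittieField m (H t) (z t)) t := hode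
  have ht₀ : 0 < t₀ :=
    mcvittie_solution_left_endpoint_pos hm hHcont (fun t ht ↦ (hHpos t ht).le) (hbb t₁ ht₁) ht₁
      hzF hrange
  have hmono : StrictMonoOn z (Ioc t₀ t₁) :=
    strictMonoOn_of_mcvittie hm (convex_Ioc t₀ t₁) (fun t ht ↦ hHpos t (ht₀.trans ht.1)) hzF hrange
  obtain ⟨L, hL, hzL⟩ := hmono.monotoneOn.exists_mem_Ico_tendsto_nhdsGT ht₀1 hrange
  refine ⟨ht₀, ?_⟩
  obtain rfl | hL₀ := hL.1.eq_or_lt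
  · exact hzL
  obtain ⟨b, hb, w, hw, hw₀₁, hwz⟩ :=
    exists_mcvittie_extension_of_tendsto hHcont ht₀ ht₀1 hzF hrange ⟨hL₀, hL.2⟩ hzL
  exact absurd ⟨b, w, hb.1.le, hb.2, hw, hw₀₁, fun t ht ↦ hwz ht⟩ hmax
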